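/- arXiv:1505.00483 — 7 statements merged into one kernel-verified Lean document; each statement's English description precedes it below -/
import Mathlib

section
/- Let G and H be finite simple graphs. There exists a graph homomorphism from G to H if and only if there exists a local correlation p(x,y|v,w) (v,w ∈ V(G), x,y ∈ V(H)) that is a winning strategy for the graph homomorphism game, i.e. p(x,y|v,v) = 0 whenever x ≠ y, and p(x,y|v,w) = 0 whenever (v,w) ∈ E(G) and (x,y) ∉ E(H). -/
open MeasureTheory

/-- There is a graph homomorphism `G → H` iff there is a local (classical) correlation,
given by random variables on a probability space, that is a winning strategy for the
graph homomorphism game. -/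
theorem homomorphism_iff_winning_local_strategy
    {VG VH : Type} [Fintype VG] [Fintype VH]
    (G : SimpleGraph VG) (H : SimpleGraph VH) :
    Nonempty (G →g H) ↔
      ∃ (Ω : Type) (mΩ : MeasurableSpace Ω) (μ : Measure Ω)
        (_ : IsProbabilityMeasure μ) (f g : VG → Ω → VH),
        (∀ v, @Measurable Ω VH mΩ ⊤ (f v)) ∧
        (∀ w, @Measurable Ω VH mΩ ⊤ (g w)) ∧
        -- winning condition (1): p(x,y|v,v) = 0 whenever x ≠ y
        (∀ v : VG, ∀ x y : VH, x ≠ y → μ {ω | f v ω = x ∧ g v ω = y} = 0) ∧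
        -- winning condition (2): p(x,y|v,w) = 0 whenever (v,w) ∈ E(G), (x,y) ∉ E(H)
        (∀ v w : VG, ∀ x y : VH, G.Adj v w → ¬ H.Adj x y →
          μ {ω | f v ω = x ∧ g w ω = y} = 0) := by
  constructor
  · rintro ⟨φ⟩
    refine ⟨Unit, ⊤, Measure.dirac (), inferInstance,
      fun v _ => φ v, fun v _ => φ v,
      fun v => @measurable_from_top Unit VH ⊤ _, fun v => @measurable_from_top Unit VH ⊤ _, ?_, ?_⟩
    · intro v x y hxy
      have : {ω : Unit | φ v = x ∧ φ v = y} = ∅ := by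
        ext ω
        simp only [Set.mem_setOf_eq, Set.mem_empty_iff_false, iff_false]
        rintro ⟨rfl, rfl⟩
        exact hxy rfl
      rw [this]; exact measure_empty
    · intro v w x y hvw hxy
      have : {ω : Unit | φ v = x ∧ φ w = y} = ∅ := by
        ext ω
        simp only [Set.mem_setOf_eq, Set.mem_empty_iff_false, iff_false]
        rintro ⟨rfl, rfl⟩
        exact hxy (φ.map_rel hvw)
      rw [this]; exact measure_empty
  · rintro ⟨Ω, mΩ, μ, hμ, f, g, hf, hg, h1, h2⟩
    have hB1 : ∀ v, μ {ω | f v ω ≠ g v ω} = 0 := by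
      intro v
      have he : {ω | f v ω ≠ g v ω}
          = ⋃ (x : VH) (y : VH) (_ : x ≠ y), {ω | f v ω = x ∧ g v ω = y} := by
        ext ω
        simp only [Set.mem_setOf_eq, Set.mem_iUnion]
        constructor
        · intro h; exact ⟨f v ω, g v ω, h, rfl, rfl⟩
        · rintro ⟨x, y, hxy, hx, hy⟩; rw [hx, hy]; exact hxy
      rw [he]
      exact measure_iUnion_null fun x => measure_iUnion_null fun y =>
        measure_iUnion_null fun hxy => h1 v x y hxy
    have hB2 : ∀ v w, G.Adj v w → μ {ω | ¬ H.Adj (f v ω) (g w ω)} = 0 := by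
      intro v w hvw
      have he : {ω | ¬ H.Adj (f v ω) (g w ω)}
          = ⋃ (x : VH) (y : VH) (_ : ¬ H.Adj x y), {ω | f v ω = x ∧ g w ω = y} := by
        ext ω
        simp only [Set.mem_setOf_eq, Set.mem_iUnion]
        constructor
        · intro h; exact ⟨f v ω, g w ω, h, rfl, rfl⟩
        · rintro ⟨x, y, hxy, hx, hy⟩; rw [hx, hy]; exact hxy
      rw [he]
      exact measure_iUnion_null fun x => measure_iUnion_null fun y =>
        measure_iUnion_null fun hxy => h2 v w x y hvw hxy
    set B : Set Ω := (⋃ v, {ω | f v ω ≠ g v ω}) ∪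
      ⋃ (v) (w) (_ : G.Adj v w), {ω | ¬ H.Adj (f v ω) (g w ω)} with hBdef
    have hB : μ B = 0 := by
      rw [hBdef]
      refine measure_union_null ?_ ?_
      · exact measure_iUnion_null hB1
      · exact measure_iUnion_null fun v => measure_iUnion_null fun w =>
          measure_iUnion_null fun hvw => hB2 v w hvw
    have hBne : B ≠ Set.univ := by
      intro h
      rw [h] at hB
      simp [hμ.measure_univ] at hB
    obtain ⟨ω, hω⟩ : Bᶜ.Nonempty := by
      rw [Set.nonempty_compl]; exact hBne
    rw [hBdef, Set.compl_union, Set.mem_inter_iff] at hω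
    obtain ⟨hω1, hω2⟩ := hω
    simp only [Set.compl_iUnion, Set.mem_iInter, Set.mem_compl_iff, Set.mem_setOf_eq,
      not_not] at hω1 hω2
    exact ⟨⟨fun v => f v ω, fun {a b} hab => by
      have := hω2 a b hab
      show H.Adj (f a ω) (f b ω)
      rwa [hω1 b] ⟩⟩
end

section
/- Let G, H be finite simple graphs on n and m vertices respectively, let ℋ be a complex Hilbert space and let h_{v,x} ∈ ℋ (v ∈ V(G), x ∈ V(H)) satisfy: ⟨h_{v,x}, h_{v,y}⟩ = 0 for x ≠ y; Σ_x h_{v,x} = Σ_x h_{w,x} for all v, w; ‖Σ_x h_{v,x}‖ = 1; and ⟨h_{v,x}, h_{w,y}⟩ = 0 whenever (v,w) ∈ E(G) and (x,y) ∉ E(H). Set p(x,y|v,w) = ⟨h_{v,x}, h_{w,y}⟩ and let φ_p : M_n(ℂ) → M_m(ℂ) be the linear map with φ_p(E_{v,w}) = Σ_{x,y} p(x,y|v,w) E_{x,y}. Then φ_p is trace-preserving on the operator system S_G, i.e. Tr(φ_p(A)) = Tr(A) for every A ∈ S_G. -/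
open scoped InnerProductSpace

/-!
On a matrix unit `E_{v,w}` the trace of `φ_p(E_{v,w})` is `Σ_x ⟪h_{v,x}, h_{w,x}⟫`. For `v = w`
the vectors `h_{v,x}` are pairwise orthogonal, so this is `‖Σ_x h_{v,x}‖² = 1 = Tr E_{v,v}`; for
an edge `v ~ w` every term vanishes because `H` has no loops, matching `Tr E_{v,w} = 0`. Both
sides being linear in `A`, they agree on the span `S_G`.
-/

/-- The operator system of a graph `G` on `n` vertices:
`S_G = span{E_{v,w} : v = w or (v,w) ∈ E(G)} ⊆ M_n(ℂ)`. -/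
noncomputable def graphOperatorSystem {n : ℕ} (G : SimpleGraph (Fin n)) :
    Submodule ℂ (Matrix (Fin n) (Fin n) ℂ) :=
  Submodule.span ℂ
    {A | ∃ v w : Fin n, (v = w ∨ G.Adj v w) ∧ A = Matrix.single v w 1}

section StrategyMap

variable {V X E : Type*} [Fintype V] [DecidableEq V]
  [NormedAddCommGroup E] [InnerProductSpace ℂ E]

/-- The map `φ_p` attached to the correlation `p(x,y|v,w) = ⟪h v x, h w y⟫`. -/
noncomputable def strategyMap (h : V → X → E) : Matrix V V ℂ →ₗ[ℂ] Matrix X X ℂ where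
  toFun A := Matrix.of fun x y => ∑ v, ∑ w, ⟪h v x, h w y⟫_ℂ * A v w
  map_add' A B := by
    ext x y
    simp only [Matrix.of_apply, Matrix.add_apply, mul_add, Finset.sum_add_distrib]
  map_smul' c A := by
    ext x y
    simp only [Matrix.of_apply, Matrix.smul_apply, smul_eq_mul, Finset.mul_sum,
      RingHom.id_apply, mul_left_comm]

omit [DecidableEq V] in
theorem strategyMap_apply (h : V → X → E) (A : Matrix V V ℂ) :
    strategyMap h A = Matrix.of fun x y => ∑ v, ∑ w, ⟪h v x, h w y⟫_ℂ * A v w :=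
  rfl

theorem strategyMap_single (h : V → X → E) (v w : V) :
    strategyMap h (Matrix.single v w 1) = Matrix.of fun x y => ⟪h v x, h w y⟫_ℂ := by
  ext x y
  simp [strategyMap_apply, Matrix.single_apply, ite_and]

theorem trace_strategyMap_single [Fintype X] (h : V → X → E) (v w : V) :
    (strategyMap h (Matrix.single v w 1)).trace = ∑ x, ⟪h v x, h w x⟫_ℂ := by
  simp only [strategyMap_single, Matrix.trace, Matrix.diag, Matrix.of_apply]

end StrategyMap

theorem sum_inner_self_of_pairwise_orthogonal {X E : Type*} [Fintype X]
    [NormedAddCommGroup E] [InnerProductSpace ℂ E] (f : X → E)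
    (horth : ∀ x y, x ≠ y → ⟪f x, f y⟫_ℂ = 0) :
    ∑ x, ⟪f x, f x⟫_ℂ = ⟪∑ x, f x, ∑ x, f x⟫_ℂ := by
  rw [inner_sum]
  refine Finset.sum_congr rfl fun x _ => ?_
  rw [sum_inner, Finset.sum_eq_single_of_mem x (Finset.mem_univ x)]
  exact fun y _ hy => horth y x hy

theorem phi_trace_preserving_general {n m : ℕ}
    (G : SimpleGraph (Fin n)) (Hg : SimpleGraph (Fin m))
    {H : Type} [NormedAddCommGroup H] [InnerProductSpace ℂ H]
    (h : Fin n → Fin m → H)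
    (horth : ∀ v : Fin n, ∀ x y : Fin m, x ≠ y → ⟪h v x, h v y⟫_ℂ = 0)
    (hnorm : ∀ v : Fin n, ‖∑ x, h v x‖ = 1)
    (hwin : ∀ v w : Fin n, ∀ x y : Fin m, G.Adj v w → ¬ Hg.Adj x y →
      ⟪h v x, h w y⟫_ℂ = 0)
    (A : Matrix (Fin n) (Fin n) ℂ) (hA : A ∈ graphOperatorSystem G) :
    (Matrix.of fun x y : Fin m => ∑ v, ∑ w, ⟪h v x, h w y⟫_ℂ * A v w).trace
      = A.trace := by
  change (Matrix.traceLinearMap _ ℂ ℂ ∘ₗ strategyMap h) A = Matrix.traceLinearMap _ ℂ ℂ A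
  refine LinearMap.eqOn_span (fun E hE => ?_) hA
  obtain ⟨v, w, hvw, rfl⟩ := hE
  simp only [LinearMap.comp_apply, Matrix.traceLinearMap_apply, trace_strategyMap_single]
  rcases hvw with rfl | hadj
  · rw [sum_inner_self_of_pairwise_orthogonal _ (horth v), inner_self_eq_norm_sq_to_K, hnorm,
      Matrix.trace_single_eq_same]
    norm_num
  · rw [Matrix.trace_single_eq_of_ne _ _ _ hadj.ne]
    exact Finset.sum_eq_zero fun x _ => hwin v w x x hadj (Hg.loopless.irrefl x)

/-- If `p(x,y|v,w) = ⟪h v x, h w y⟫` comes from a winning vectorial strategy for the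
homomorphism game from `G` to `H`, then the associated completely positive map
`φ_p(E_{v,w}) = Σ_{x,y} p(x,y|v,w) E_{x,y}` is trace-preserving on the operator system `S_G`. -/
theorem phi_trace_preserving {n m : ℕ}
    (G : SimpleGraph (Fin n)) (Hg : SimpleGraph (Fin m))
    {H : Type} [NormedAddCommGroup H] [InnerProductSpace ℂ H] [CompleteSpace H]
    (h : Fin n → Fin m → H)
    (horth : ∀ v : Fin n, ∀ x y : Fin m, x ≠ y → ⟪h v x, h v y⟫_ℂ = 0)
    (hsum : ∀ v w : Fin n, ∑ x, h v x = ∑ x, h w x)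
    (hnorm : ∀ v : Fin n, ‖∑ x, h v x‖ = 1)
    (hwin : ∀ v w : Fin n, ∀ x y : Fin m, G.Adj v w → ¬ Hg.Adj x y →
      ⟪h v x, h w y⟫_ℂ = 0)
    (A : Matrix (Fin n) (Fin n) ℂ) (hA : A ∈ graphOperatorSystem G) :
    (Matrix.of fun x y : Fin m => ∑ v, ∑ w, ⟪h v x, h w y⟫_ℂ * A v w).trace
      = A.trace :=
  phi_trace_preserving_general G Hg h horth hnorm hwin A hA
end

section
/- Let G, H be finite simple graphs on n and m vertices respectively, let ℋ be a complex Hilbert space and let h_{v,x} ∈ ℋ (v ∈ V(G), x ∈ V(H)) satisfy: ⟨h_{v,x}, h_{v,y}⟩ = 0 for x ≠ y; Σ_x h_{v,x} = Σ_x h_{w,x} for all v, w; ‖Σ_x h_{v,x}‖ = 1; and ⟨h_{v,x}, h_{w,y}⟩ = 0 whenever (v,w) ∈ E(G) and (x,y) ∉ E(H). Set p(x,y|v,w) = ⟨h_{v,x}, h_{w,y}⟩ and let φ_p : M_n(ℂ) → M_m(ℂ) be the linear map with φ_p(E_{v,w}) = Σ_{x,y} p(x,y|v,w) E_{x,y}.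 Then φ_p maps the operator system S_G into the operator system S_H, i.e. φ_p(A) ∈ S_H for every A ∈ S_G. -/
open scoped InnerProductSpace

lemma mem_graphOperatorSystem_of_apply_eq_zero {m : ℕ} {Hg : SimpleGraph (Fin m)}
    {M : Matrix (Fin m) (Fin m) ℂ} (hM : ∀ x y, x ≠ y → ¬ Hg.Adj x y → M x y = 0) :
    M ∈ graphOperatorSystem Hg := by
  rw [Matrix.matrix_eq_sum_single M]
  refine Submodule.sum_mem _ fun x _ => Submodule.sum_mem _ fun y _ => ?_
  by_cases hxy : x = y ∨ Hg.Adj x y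
  · rw [← mul_one (M x y), ← smul_eq_mul, ← Matrix.smul_single]
    exact Submodule.smul_mem _ _ (Submodule.subset_span ⟨x, y, hxy, rfl⟩)
  · rw [not_or] at hxy
    simp [hM x y hxy.1 hxy.2]

/-- The map `φ_p : E_{v,w} ↦ ∑_{x,y} p(x,y|v,w) E_{x,y}`, where `p x y v w` stands for
`p(x,y|v,w)`. -/
def kernelMap {R ι κ : Type*} [CommSemiring R] [Fintype ι] (p : κ → κ → ι → ι → R) :
    Matrix ι ι R →ₗ[R] Matrix κ κ R where
  toFun A := Matrix.of fun x y => ∑ v, ∑ w, p x y v w * A v w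
  map_add' A B := by
    ext x y
    simp only [Matrix.of_apply, Matrix.add_apply, mul_add, Finset.sum_add_distrib]
  map_smul' c A := by
    ext x y
    simp only [Matrix.of_apply, Matrix.smul_apply, smul_eq_mul, Finset.mul_sum,
      RingHom.id_apply]
    exact Finset.sum_congr rfl fun v _ => Finset.sum_congr rfl fun w _ => by ring

lemma kernelMap_single {R ι κ : Type*} [CommSemiring R] [Fintype ι] [DecidableEq ι]
    (p : κ → κ → ι → ι → R) (v w : ι) (c : R) :
    kernelMap p (Matrix.single v w c) = Matrix.of fun x y => p x y v w * c := by
  ext x y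
  simp [kernelMap, Matrix.single_apply, ite_and, mul_ite, Finset.sum_ite_eq]

lemma kernelMap_mem_graphOperatorSystem {n m : ℕ} {G : SimpleGraph (Fin n)}
    {Hg : SimpleGraph (Fin m)} {p : Fin m → Fin m → Fin n → Fin n → ℂ}
    (hp : ∀ v w x y, (v = w ∨ G.Adj v w) → x ≠ y → ¬ Hg.Adj x y → p x y v w = 0)
    {A : Matrix (Fin n) (Fin n) ℂ} (hA : A ∈ graphOperatorSystem G) :
    kernelMap p A ∈ graphOperatorSystem Hg := by
  suffices (graphOperatorSystem G).map (kernelMap p) ≤ graphOperatorSystem Hg from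
    this (Submodule.mem_map_of_mem hA)
  rw [graphOperatorSystem, Submodule.map_span_le]
  rintro _ ⟨v, w, hvw, rfl⟩
  rw [kernelMap_single]
  exact mem_graphOperatorSystem_of_apply_eq_zero fun x y hxy hadj => by
    simp [hp v w x y hvw hxy hadj]

theorem phi_maps_opSystem_into_opSystem_general {n m : ℕ}
    (G : SimpleGraph (Fin n)) (Hg : SimpleGraph (Fin m))
    {H : Type} [NormedAddCommGroup H] [InnerProductSpace ℂ H]
    (h : Fin n → Fin m → H)
    (horth : ∀ v : Fin n, ∀ x y : Fin m, x ≠ y → ⟪h v x, h v y⟫_ℂ = 0)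
    (hwin : ∀ v w : Fin n, ∀ x y : Fin m, G.Adj v w → ¬ Hg.Adj x y →
      ⟪h v x, h w y⟫_ℂ = 0)
    (A : Matrix (Fin n) (Fin n) ℂ) (hA : A ∈ graphOperatorSystem G) :
    (Matrix.of fun x y : Fin m => ∑ v, ∑ w, ⟪h v x, h w y⟫_ℂ * A v w)
      ∈ graphOperatorSystem Hg := by
  refine kernelMap_mem_graphOperatorSystem (p := fun x y v w => ⟪h v x, h w y⟫_ℂ) ?_ hA
  rintro v w x y (rfl | hvw) hxy hadj
  · exact horth v x y hxy
  · exact hwin v w x y hvw hadj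

/-- If `p(x,y|v,w) = ⟪h v x, h w y⟫` comes from a winning vectorial strategy for the
homomorphism game from `G` to `H`, then the associated completely positive map
`φ_p(E_{v,w}) = Σ_{x,y} p(x,y|v,w) E_{x,y}` maps the operator system `S_G` into `S_H`. -/
theorem phi_maps_opSystem_into_opSystem {n m : ℕ}
    (G : SimpleGraph (Fin n)) (Hg : SimpleGraph (Fin m))
    {H : Type} [NormedAddCommGroup H] [InnerProductSpace ℂ H] [CompleteSpace H]
    (h : Fin n → Fin m → H)
    (horth : ∀ v : Fin n, ∀ x y : Fin m, x ≠ y → ⟪h v x, h v y⟫_ℂ = 0)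
    (hsum : ∀ v w : Fin n, ∑ x, h v x = ∑ x, h w x)
    (hnorm : ∀ v : Fin n, ‖∑ x, h v x‖ = 1)
    (hwin : ∀ v w : Fin n, ∀ x y : Fin m, G.Adj v w → ¬ Hg.Adj x y →
      ⟪h v x, h w y⟫_ℂ = 0)
    (A : Matrix (Fin n) (Fin n) ℂ) (hA : A ∈ graphOperatorSystem G) :
    (Matrix.of fun x y : Fin m => ∑ v, ∑ w, ⟪h v x, h w y⟫_ℂ * A v w)
      ∈ graphOperatorSystem Hg :=
  phi_maps_opSystem_into_opSystem_general G Hg h horth hwin A hA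
end

section
/- Let p(x,y|v,w) (v,w ∈ I₁, x,y ∈ O₁, both finite) and q(a,b|x,y) (x,y ∈ O₁, a,b ∈ O₂, finite) be vectorial correlations. Then r(a,b|v,w) := Σ_{x,y} q(a,b|x,y) p(x,y|v,w) is a vectorial correlation with input set I₁ and output set O₂. -/
open scoped InnerProductSpace

/-- A realization of a family `p(x,y|v,w)` (inputs in `I`, outputs in `O`) as a
vectorial correlation: a complex Hilbert space together with vectors `X v x`, `Y w y`
satisfying the defining conditions, with `p(x,y|v,w) = ⟪X v x, Y w y⟫ ≥ 0`. -/
structure VectRealization {I O : Type} [Fintype O] (p : O → O → I → I → ℝ) where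
  H : Type
  [nacg : NormedAddCommGroup H]
  [ips : InnerProductSpace ℂ H]
  [cs : CompleteSpace H]
  X : I → O → H
  Y : I → O → H
  orthX : ∀ v : I, ∀ x y : O, x ≠ y → ⟪X v x, X v y⟫_ℂ = 0
  orthY : ∀ w : I, ∀ x y : O, x ≠ y → ⟪Y w x, Y w y⟫_ℂ = 0
  sumEq : ∀ v w : I, ∑ x, X v x = ∑ y, Y w y
  normOne : ∀ v : I, ‖∑ x, X v x‖ = 1
  nonneg : ∀ v w : I, ∀ x y : O, 0 ≤ p x y v w
  eq : ∀ (x y : O) (v w : I), (p x y v w : ℂ) = ⟪X v x, Y w y⟫_ℂ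

/-- `p` is a vectorial correlation if it admits a vectorial realization. -/
def IsVectCorrelation {I O : Type} [Fintype O] (p : O → O → I → I → ℝ) : Prop :=
  Nonempty (VectRealization p)

/-! Tensor the two realizations: with `S` realizing `q` by vectors `X'`, `Y'`, take
`Z v a = Σ_x X v x ⊗ X' x a` and `W w b = Σ_y Y w y ⊗ Y' y b`. Inner products multiply, so
`⟪Z v a, W w b⟫ = Σ_{x,y} p(x,y|v,w) q(a,b|x,y)` and orthogonality is inherited. Since
`Σ_a X' x a` is one and the same unit vector `u` for every `x`, all the `Z v ·` and `W w ·`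
sum to `(Σ_x X v x) ⊗ u`. The algebraic tensor product is not complete, so the realization
finally lives in its completion. -/

open TensorProduct

section InnerTensor

variable {𝕜 E F ι κ : Type*} [RCLike 𝕜] [NormedAddCommGroup E] [InnerProductSpace 𝕜 E]
  [NormedAddCommGroup F] [InnerProductSpace 𝕜 F]

theorem inner_sum_tmul_sum_tmul (s : Finset ι) (t : Finset κ) (f : ι → E) (g : ι → F)
    (f' : κ → E) (g' : κ → F) :
    ⟪∑ i ∈ s, f i ⊗ₜ[𝕜] g i, ∑ j ∈ t, f' j ⊗ₜ[𝕜] g' j⟫_𝕜 =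
      ∑ i ∈ s, ∑ j ∈ t, ⟪f i, f' j⟫_𝕜 * ⟪g i, g' j⟫_𝕜 := by
  rw [sum_inner]
  simp only [inner_sum, inner_tmul]

theorem inner_sum_tmul_sum_tmul_eq_zero (s : Finset ι) {f f' : ι → E} {g g' : ι → F}
    (hf : ∀ i j, i ≠ j → ⟪f i, f' j⟫_𝕜 = 0) (hg : ∀ i, ⟪g i, g' i⟫_𝕜 = 0) :
    ⟪∑ i ∈ s, f i ⊗ₜ[𝕜] g i, ∑ j ∈ s, f' j ⊗ₜ[𝕜] g' j⟫_𝕜 = 0 := by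
  rw [inner_sum_tmul_sum_tmul]
  refine Finset.sum_eq_zero fun i _ => Finset.sum_eq_zero fun j _ => ?_
  obtain rfl | hij := eq_or_ne i j
  · rw [hg, mul_zero]
  · rw [hf i j hij, zero_mul]

end InnerTensor

theorem IsVectCorrelation.of_inner {I O E : Type} [Fintype O] [NormedAddCommGroup E]
    [InnerProductSpace ℂ E] {p : O → O → I → I → ℝ} (X Y : I → O → E)
    (orthX : ∀ v : I, ∀ x y : O, x ≠ y → ⟪X v x, X v y⟫_ℂ = 0)
    (orthY : ∀ w : I, ∀ x y : O, x ≠ y → ⟪Y w x, Y w y⟫_ℂ = 0)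
    (sumEq : ∀ v w : I, ∑ x, X v x = ∑ y, Y w y)
    (normOne : ∀ v : I, ‖∑ x, X v x‖ = 1)
    (nonneg : ∀ v w : I, ∀ x y : O, 0 ≤ p x y v w)
    (eq : ∀ (x y : O) (v w : I), (p x y v w : ℂ) = ⟪X v x, Y w y⟫_ℂ) :
    IsVectCorrelation p :=
  let j : E →ₗᵢ[ℂ] UniformSpace.Completion E := UniformSpace.Completion.toComplₗᵢ
  ⟨{ H := UniformSpace.Completion E
     X := fun v x => j (X v x)
     Y := fun w y => j (Y w y)
     orthX := fun v x y hxy => by rw [j.inner_map_map, orthX v x y hxy]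
     orthY := fun w x y hxy => by rw [j.inner_map_map, orthY w x y hxy]
     sumEq := fun v w => by simp only [← map_sum, sumEq v w]
     normOne := fun v => by rw [← map_sum, j.norm_map, normOne v]
     nonneg := nonneg
     eq := fun x y v w => by rw [j.inner_map_map, eq] }⟩

namespace VectRealization

attribute [instance] VectRealization.nacg VectRealization.ips

variable {I₁ O₁ O₂ : Type} [Fintype O₁] [Fintype O₂]
  {p : O₁ → O₁ → I₁ → I₁ → ℝ} {q : O₂ → O₂ → O₁ → O₁ → ℝ}

theorem nonempty_outputs (R : VectRealization p) (v : I₁) : Nonempty O₁ := by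
  by_contra h
  rw [not_nonempty_iff] at h
  simpa using R.normOne v

theorem sum_X_eq_sum_X (R : VectRealization p) (v v' : I₁) :
    ∑ x, R.X v x = ∑ x, R.X v' x :=
  (R.sumEq v v').trans (R.sumEq v' v').symm

noncomputable def compX (R : VectRealization p) (S : VectRealization q) (v : I₁) (a : O₂) :
    R.H ⊗[ℂ] S.H :=
  ∑ x, R.X v x ⊗ₜ S.X x a

noncomputable def compY (R : VectRealization p) (S : VectRealization q) (w : I₁) (b : O₂) :
    R.H ⊗[ℂ] S.H :=
  ∑ y, R.Y w y ⊗ₜ S.Y y b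

variable (R : VectRealization p) (S : VectRealization q)

theorem sum_compX (v : I₁) (x₀ : O₁) :
    ∑ a, R.compX S v a = (∑ x, R.X v x) ⊗ₜ (∑ a, S.X x₀ a) := by
  simp only [compX]
  rw [Finset.sum_comm, sum_tmul]
  simp only [← tmul_sum, S.sum_X_eq_sum_X _ x₀]

theorem sum_compY (w : I₁) (x₀ : O₁) :
    ∑ b, R.compY S w b = (∑ y, R.Y w y) ⊗ₜ (∑ a, S.X x₀ a) := by
  simp only [compY]
  rw [Finset.sum_comm, sum_tmul]
  simp only [← tmul_sum, ← S.sumEq x₀]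

end VectRealization

theorem isVectCorrelation_comp_general {I₁ O₁ O₂ : Type} [Fintype O₁] [Fintype O₂]
    (p : O₁ → O₁ → I₁ → I₁ → ℝ) (q : O₂ → O₂ → O₁ → O₁ → ℝ)
    (hp : IsVectCorrelation p) (hq : IsVectCorrelation q) :
    IsVectCorrelation (fun a b v w => ∑ x, ∑ y, q a b x y * p x y v w) := by
  obtain ⟨R⟩ := hp
  obtain ⟨S⟩ := hq
  refine .of_inner (R.compX S) (R.compY S)
    (fun v a b hab => inner_sum_tmul_sum_tmul_eq_zero _ (R.orthX v) (S.orthX · a b hab))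
    (fun w a b hab => inner_sum_tmul_sum_tmul_eq_zero _ (R.orthY w) (S.orthY · a b hab))
    (fun v w => ?_) (fun v => ?_)
    (fun v w a b => Finset.sum_nonneg fun x _ => Finset.sum_nonneg fun y _ =>
      mul_nonneg (S.nonneg x y a b) (R.nonneg v w x y))
    (fun a b v w => ?_)
  · obtain ⟨x₀⟩ := R.nonempty_outputs v
    rw [R.sum_compX S v x₀, R.sum_compY S w x₀, R.sumEq v w]
  · obtain ⟨x₀⟩ := R.nonempty_outputs v
    rw [R.sum_compX S v x₀, norm_tmul, R.normOne, S.normOne, one_mul]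
  · simp only [VectRealization.compX, VectRealization.compY, inner_sum_tmul_sum_tmul,
      Complex.ofReal_sum, Complex.ofReal_mul, R.eq, S.eq, mul_comm]

/-- The composition `r(a,b|v,w) = Σ_{x,y} q(a,b|x,y) p(x,y|v,w)` of two vectorial
correlations is again a vectorial correlation. -/
theorem isVectCorrelation_comp {I₁ O₁ O₂ : Type} [Fintype I₁] [Fintype O₁] [Fintype O₂]
    (p : O₁ → O₁ → I₁ → I₁ → ℝ) (q : O₂ → O₂ → O₁ → O₁ → ℝ)
    (hp : IsVectCorrelation p) (hq : IsVectCorrelation q) :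
    IsVectCorrelation (fun a b v w => ∑ x, ∑ y, q a b x y * p x y v w) :=
  isVectCorrelation_comp_general p q hp hq
end

section
/- Let G, H, K be finite simple graphs. Suppose p(x,y|v,w) is a synchronous vectorial correlation with inputs V(G) and outputs V(H) satisfying p(x,y|v,w) = 0 whenever (v,w) ∈ E(G) and (x,y) ∉ E(H), and q(a,b|x,y) is a synchronous vectorial correlation with inputs V(H) and outputs V(K) satisfying q(a,b|x,y) = 0 whenever (x,y) ∈ E(H) and (a,b) ∉ E(K). Then r(a,b|v,w) := Σ_{x,y} q(a,b|x,y) p(x,y|v,w) is a synchronous vectorial correlation with inputs V(G) and outputs V(K) satisfying r(a,b|v,w) = 0 whenever (v,w) ∈ E(G) and (a,b) ∉ E(K). In particular, if there exist winning vectorial strategies for the homomorphism games from G to H and from H to K, then there exists one from G to K. -/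
open scoped InnerProductSpace

/-- `p` is synchronous: `p(x,y|v,v) = 0` for all `v` and all `x ≠ y`. -/
def Synchronous {I O : Type} (p : O → O → I → I → ℝ) : Prop :=
  ∀ (v : I) (x y : O), x ≠ y → p x y v v = 0

/-- The winning condition for the graph homomorphism game from `G` to `H`:
`p(x,y|v,w) = 0` whenever `(v,w) ∈ E(G)` and `(x,y) ∉ E(H)`. -/
def WinningFor {VG VH : Type} (G : SimpleGraph VG) (Hg : SimpleGraph VH)
    (p : VH → VH → VG → VG → ℝ) : Prop :=
  ∀ (v w : VG) (x y : VH), G.Adj v w → ¬ Hg.Adj x y → p x y v w = 0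

open scoped TensorProduct

/-!
If `X, Y` realize `p` and `X', Y'` realize `q`, then the vectors
`Σ_x X_{v,x} ⊗ X'_{x,a}` and `Σ_y Y_{w,y} ⊗ Y'_{y,b}` in the tensor product realize the composite
correlation, since `⟪x ⊗ y, x' ⊗ y'⟫ = ⟪x, x'⟫ ⟪y, y'⟫`. Orthogonality survives because, the
`X_{v,x}` being mutually orthogonal, only the terms `‖X_{v,x}‖² ⟪X'_{x,a}, X'_{x,a'}⟫` remain; summing over the outputs gives `(Σ_x X_{v,x}) ⊗ e`, where
`e` is the common unit vector `Σ_a X'_{x,a} = Σ_b Y'_{y,b}`. Completing the tensor product gives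
the required Hilbert space. Synchronicity and the winning condition hold termwise in the sum
defining `r`.
-/

namespace TensorProduct

variable {𝕜 E F J O : Type*} [RCLike 𝕜] [NormedAddCommGroup E] [InnerProductSpace 𝕜 E]
  [NormedAddCommGroup F] [InnerProductSpace 𝕜 F] [Fintype J] [Fintype O]

theorem inner_sum_tmul_sum_tmul (a c : J → E) (b d : J → F) :
    ⟪∑ x, a x ⊗ₜ[𝕜] b x, ∑ y, c y ⊗ₜ[𝕜] d y⟫_𝕜 = ∑ x, ∑ y, ⟪a x, c y⟫_𝕜 * ⟪b x, d y⟫_𝕜 := by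
  simp only [sum_inner, inner_sum, inner_tmul]
  exact Finset.sum_comm

theorem inner_sum_tmul_sum_tmul_eq_zero {a : J → E} {b d : J → F}
    (ha : ∀ x y, x ≠ y → ⟪a x, a y⟫_𝕜 = 0) (hbd : ∀ x, ⟪b x, d x⟫_𝕜 = 0) :
    ⟪∑ x, a x ⊗ₜ[𝕜] b x, ∑ y, a y ⊗ₜ[𝕜] d y⟫_𝕜 = 0 := by
  rw [inner_sum_tmul_sum_tmul]
  refine Finset.sum_eq_zero fun x _ => Finset.sum_eq_zero fun y _ => ?_
  obtain rfl | hxy := eq_or_ne x y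
  · rw [hbd, mul_zero]
  · rw [ha x y hxy, zero_mul]

theorem sum_sum_tmul_of_sum_eq (u : J → E) {B : J → O → F} {e : F} (hB : ∀ x, ∑ a, B x a = e) :
    ∑ a, ∑ x, u x ⊗ₜ[𝕜] B x a = (∑ x, u x) ⊗ₜ[𝕜] e := by
  rw [Finset.sum_comm, sum_tmul]
  simp only [← tmul_sum, hB]

end TensorProduct

attribute [local instance] VectRealization.nacg VectRealization.ips

section

variable {I O : Type} [Fintype O] {p : O → O → I → I → ℝ}

theorem IsVectCorrelation.of_vectors {E : Type} [NormedAddCommGroup E] [InnerProductSpace ℂ E]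
    (X Y : I → O → E)
    (orthX : ∀ v x y, x ≠ y → ⟪X v x, X v y⟫_ℂ = 0)
    (orthY : ∀ w x y, x ≠ y → ⟪Y w x, Y w y⟫_ℂ = 0)
    (sumEq : ∀ v w, ∑ x, X v x = ∑ y, Y w y)
    (normOne : ∀ v, ‖∑ x, X v x‖ = 1)
    (nonneg : ∀ v w x y, 0 ≤ p x y v w)
    (eq : ∀ x y v w, (p x y v w : ℂ) = ⟪X v x, Y w y⟫_ℂ) :
    IsVectCorrelation p :=
  let ι : E →ₗᵢ[ℂ] UniformSpace.Completion E := UniformSpace.Completion.toComplₗᵢ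
  ⟨{ H := UniformSpace.Completion E
     X := fun v x => ι (X v x)
     Y := fun w y => ι (Y w y)
     orthX := fun v x y hxy => by rw [ι.inner_map_map, orthX v x y hxy]
     orthY := fun w x y hxy => by rw [ι.inner_map_map, orthY w x y hxy]
     sumEq := fun v w => by simp only [← map_sum, sumEq v w]
     normOne := fun v => by rw [← map_sum, ι.norm_map, normOne v]
     nonneg := nonneg
     eq := fun x y v w => by rw [ι.inner_map_map, eq] }⟩

namespace VectRealization

theorem nonempty_output (R : VectRealization p) (v : I) : Nonempty O := by
  by_contra h
  have hv := R.normOne v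
  rw [not_nonempty_iff] at h
  simp at hv

theorem exists_norm_eq_one_sum_eq (R : VectRealization p) (v₀ : I) :
    ∃ e : R.H, ‖e‖ = 1 ∧ (∀ v, ∑ x, R.X v x = e) ∧ ∀ w, ∑ y, R.Y w y = e := by
  refine ⟨∑ x, R.X v₀ x, R.normOne v₀, fun v => ?_, fun w => (R.sumEq v₀ w).symm⟩
  rw [R.sumEq v v₀, R.sumEq v₀ v₀]

end VectRealization

end

section

variable {I J O : Type} [Fintype J] [Fintype O] {p : J → J → I → I → ℝ} {q : O → O → J → J → ℝ}

theorem IsVectCorrelation.comp (hp : IsVectCorrelation p) (hq : IsVectCorrelation q) :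
    IsVectCorrelation (fun a b v w => ∑ x, ∑ y, q a b x y * p x y v w) := by
  obtain ⟨R⟩ := hp
  obtain ⟨S⟩ := hq
  have exists_common_sum (v : I) : ∃ e : R.H ⊗[ℂ] S.H, ‖e‖ = 1 ∧
      (∀ v', ∑ a, ∑ x, R.X v' x ⊗ₜ[ℂ] S.X x a = e) ∧
      ∀ w, ∑ b, ∑ y, R.Y w y ⊗ₜ[ℂ] S.Y y b = e := by
    obtain ⟨x₀⟩ := R.nonempty_output v
    obtain ⟨e, he, hSX, hSY⟩ := S.exists_norm_eq_one_sum_eq x₀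
    obtain ⟨s, hs, hRX, hRY⟩ := R.exists_norm_eq_one_sum_eq v
    refine ⟨s ⊗ₜ e, by rw [TensorProduct.norm_tmul, hs, he, one_mul], fun v' => ?_, fun w => ?_⟩
    · rw [TensorProduct.sum_sum_tmul_of_sum_eq _ hSX, hRX]
    · rw [TensorProduct.sum_sum_tmul_of_sum_eq _ hSY, hRY]
  refine .of_vectors (fun v a => ∑ x, R.X v x ⊗ₜ[ℂ] S.X x a)
    (fun w b => ∑ y, R.Y w y ⊗ₜ[ℂ] S.Y y b)
    (fun v a a' h => TensorProduct.inner_sum_tmul_sum_tmul_eq_zero (R.orthX v) (S.orthX · a a' h))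
    (fun w b b' h => TensorProduct.inner_sum_tmul_sum_tmul_eq_zero (R.orthY w) (S.orthY · b b' h))
    (fun v w => ?_) (fun v => ?_)
    (fun v w a b => Finset.sum_nonneg fun x _ => Finset.sum_nonneg fun y _ =>
      mul_nonneg (S.nonneg x y a b) (R.nonneg v w x y))
    (fun a b v w => ?_)
  · obtain ⟨e, -, hX, hY⟩ := exists_common_sum v
    rw [hX, hY]
  · obtain ⟨e, he, hX, -⟩ := exists_common_sum v
    rw [hX, he]
  · rw [TensorProduct.inner_sum_tmul_sum_tmul]
    push_cast
    simp only [R.eq, S.eq, mul_comm]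

end

theorem Synchronous.comp {I J O : Type} [Fintype J] {p : J → J → I → I → ℝ}
    {q : O → O → J → J → ℝ} (hp : Synchronous p) (hq : Synchronous q) :
    Synchronous (fun a b v w => ∑ x, ∑ y, q a b x y * p x y v w) := by
  intro v a b hab
  refine Finset.sum_eq_zero fun x _ => Finset.sum_eq_zero fun y _ => ?_
  obtain rfl | hxy := eq_or_ne x y
  · rw [hq x a b hab, zero_mul]
  · rw [hp v x y hxy, mul_zero]

theorem WinningFor.comp {VG VH VK : Type} [Fintype VH] {G : SimpleGraph VG}
    {Hg : SimpleGraph VH} {K : SimpleGraph VK} {p : VH → VH → VG → VG → ℝ}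
    {q : VK → VK → VH → VH → ℝ} (hp : WinningFor G Hg p) (hq : WinningFor Hg K q) :
    WinningFor G K (fun a b v w => ∑ x, ∑ y, q a b x y * p x y v w) := by
  intro v w a b hvw hab
  refine Finset.sum_eq_zero fun x _ => Finset.sum_eq_zero fun y _ => ?_
  by_cases hxy : Hg.Adj x y
  · rw [hq x y a b hxy hab, zero_mul]
  · rw [hp v w x y hvw hxy, mul_zero]

theorem vect_homomorphism_comp_general {VG VH VK : Type}
    [Fintype VH] [Fintype VK]
    (G : SimpleGraph VG) (Hg : SimpleGraph VH) (K : SimpleGraph VK)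
    (p : VH → VH → VG → VG → ℝ) (q : VK → VK → VH → VH → ℝ)
    (hp : IsVectCorrelation p) (hps : Synchronous p) (hpw : WinningFor G Hg p)
    (hq : IsVectCorrelation q) (hqs : Synchronous q) (hqw : WinningFor Hg K q) :
    IsVectCorrelation (fun a b v w => ∑ x, ∑ y, q a b x y * p x y v w) ∧
    Synchronous (fun a b v w => ∑ x, ∑ y, q a b x y * p x y v w) ∧
    WinningFor G K (fun a b v w => ∑ x, ∑ y, q a b x y * p x y v w) :=
  ⟨hp.comp hq, hps.comp hqs, hpw.comp hqw⟩

/-- Composition of winning synchronous vectorial strategies: if there are winning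
vectorial strategies for the homomorphism games from `G` to `H` and from `H` to `K`,
then `r(a,b|v,w) = Σ_{x,y} q(a,b|x,y) p(x,y|v,w)` is a winning vectorial strategy for
the game from `G` to `K`. -/
theorem vect_homomorphism_comp {VG VH VK : Type}
    [Fintype VG] [Fintype VH] [Fintype VK]
    (G : SimpleGraph VG) (Hg : SimpleGraph VH) (K : SimpleGraph VK)
    (p : VH → VH → VG → VG → ℝ) (q : VK → VK → VH → VH → ℝ)
    (hp : IsVectCorrelation p) (hps : Synchronous p) (hpw : WinningFor G Hg p)
    (hq : IsVectCorrelation q) (hqs : Synchronous q) (hqw : WinningFor Hg K q) :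
    IsVectCorrelation (fun a b v w => ∑ x, ∑ y, q a b x y * p x y v w) ∧
    Synchronous (fun a b v w => ∑ x, ∑ y, q a b x y * p x y v w) ∧
    WinningFor G K (fun a b v w => ∑ x, ∑ y, q a b x y * p x y v w) :=
  vect_homomorphism_comp_general G Hg K p q hp hps hpw hq hqs hqw
end

section
/- Let G, H, K be finite simple graphs. Let {E_{v,x} : v ∈ V(G), x ∈ V(H)} be a representation of the graph homomorphism game from G to H and {F_{x,a} : x ∈ V(H), a ∈ V(K)} a representation of the graph homomorphism game from H to K, both on the same complex Hilbert space, such that every E_{v,x} commutes with every F_{y,a}. Then the operators G_{v,a} := Σ_{x ∈ V(H)} E_{v,x} F_{x,a} form a representation of the graph homomorphism game from G to K: each G_{v,a} is an orthogonal projection, Σ_a G_{v,a} = I for every v ∈ V(G), and G_{v,a} G_{w,b} = 0 whenever (v,w) ∈ E(G) and (a,b) ∉ E(K). -/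
/-- A representation of the graph homomorphism game from `G` to `H` on a complex
Hilbert space. -/
def IsGameRep {VG VH : Type} [Fintype VH] {H : Type}
    [NormedAddCommGroup H] [InnerProductSpace ℂ H] [CompleteSpace H]
    (G : SimpleGraph VG) (Hg : SimpleGraph VH) (E : VG → VH → H →L[ℂ] H) : Prop :=
  (∀ v x, IsSelfAdjoint (E v x)) ∧
  (∀ v x, E v x * E v x = E v x) ∧
  (∀ v, ∑ x, E v x = 1) ∧
  (∀ v w x y, G.Adj v w → ¬ Hg.Adj x y → E v x * E w y = 0)

/-- Selfadjoint idempotents summing to 1 are pairwise orthogonal. -/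
lemma proj_orth {ι : Type} [Fintype ι]
    {H : Type} [NormedAddCommGroup H] [InnerProductSpace ℂ H] [CompleteSpace H]
    (P : ι → H →L[ℂ] H) (hsa : ∀ i, IsSelfAdjoint (P i))
    (hidem : ∀ i, P i * P i = P i) (hsum : ∑ i, P i = 1)
    {i j : ι} (hij : i ≠ j) : P i * P j = 0 := by
  classical
  have key : ∑ k ∈ Finset.univ.erase i, P i * P k * P i = 0 := by
    have h1 : ∑ k, P i * P k * P i = P i := by
      rw [← Finset.sum_mul, ← Finset.mul_sum, hsum, mul_one, hidem]
    have h2 : ∑ k, P i * P k * P i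
        = P i * P i * P i + ∑ k ∈ Finset.univ.erase i, P i * P k * P i := by
      rw [← Finset.add_sum_erase _ _ (Finset.mem_univ i)]
    rw [h1, hidem, hidem] at h2
    exact (left_eq_add.mp h2)
  have hterm : ∀ k, P i * P k * P i = star (P k * P i) * (P k * P i) := by
    intro k
    rw [star_mul, (hsa k).star_eq, (hsa i).star_eq,
      show P i * P k * (P k * P i) = P i * (P k * P k) * P i by noncomm_ring, hidem]
  have hnonneg : ∀ k ∈ Finset.univ.erase i, (0 : H →L[ℂ] H) ≤ P i * P k * P i := by
    intro k _
    rw [hterm k]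
    exact star_mul_self_nonneg _
  have hmem : j ∈ Finset.univ.erase i := Finset.mem_erase.mpr ⟨hij.symm, Finset.mem_univ j⟩
  have hj : P i * P j * P i = 0 :=
    (Finset.sum_eq_zero_iff_of_nonneg hnonneg).mp key j hmem
  have hji : P j * P i = 0 := by
    have h := hterm j
    rw [hj] at h
    exact (CStarRing.star_mul_self_eq_zero_iff _).mp h.symm
  calc P i * P j = star (P j * P i) := by
        rw [star_mul, (hsa i).star_eq, (hsa j).star_eq]
    _ = 0 := by rw [hji, star_zero]

/-- If `{E v x}` represents the homomorphism game from `G` to `H` and `{F x a}`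
represents the homomorphism game from `H` to `K`, on the same Hilbert space and with
every `E v x` commuting with every `F y a`, then `G v a := Σ_x (E v x) * (F x a)`
represents the homomorphism game from `G` to `K`. -/
theorem gameRep_comp {VG VH VK : Type} [Fintype VH] [Fintype VK]
    {H : Type} [NormedAddCommGroup H] [InnerProductSpace ℂ H] [CompleteSpace H]
    (G : SimpleGraph VG) (Hg : SimpleGraph VH) (K : SimpleGraph VK)
    (E : VG → VH → H →L[ℂ] H) (F : VH → VK → H →L[ℂ] H)
    (hE : IsGameRep G Hg E) (hF : IsGameRep Hg K F)
    (hcomm : ∀ (v : VG) (x y : VH) (a : VK), E v x * F y a = F y a * E v x) :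
    IsGameRep G K (fun v a => ∑ x, E v x * F x a) := by
  classical
  obtain ⟨hEsa, hEid, hEsum, hEorth⟩ := hE
  obtain ⟨hFsa, hFid, hFsum, hForth⟩ := hF
  have hEE : ∀ v x y, x ≠ y → E v x * E v y = 0 := fun v x y hxy =>
    proj_orth (E v) (hEsa v) (hEid v) (hEsum v) hxy
  have hswap : ∀ (v w : VG) (x y : VH) (a b : VK),
      E v x * F x a * (E w y * F y b) = E v x * E w y * (F x a * F y b) := by
    intro v w x y a b
    rw [show E v x * F x a * (E w y * F y b) = E v x * (F x a * E w y) * F y b by noncomm_ring,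
      ← hcomm]
    noncomm_ring
  refine ⟨?_, ?_, ?_, ?_⟩
  · intro v a
    rw [IsSelfAdjoint, star_sum]
    refine Finset.sum_congr rfl fun x _ => ?_
    rw [star_mul, (hEsa v x).star_eq, (hFsa x a).star_eq, hcomm]
  · intro v a
    simp only
    rw [Finset.sum_mul_sum]
    have hterms : ∀ x y : VH, E v x * F x a * (E v y * F y a)
        = if x = y then E v x * F x a else 0 := by
      intro x y
      by_cases hxy : x = y
      · subst hxy
        rw [if_pos rfl, hswap, hEid, hFid]
      · rw [if_neg hxy, hswap, hEE v x y hxy, zero_mul]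
    simp [hterms, Finset.sum_ite_eq]
  · intro v
    simp only
    calc (∑ a, ∑ x, E v x * F x a) = ∑ x, E v x * ∑ a, F x a := by
          rw [Finset.sum_comm]; simp [Finset.mul_sum]
      _ = 1 := by simp [hFsum, hEsum]
  · intro v w a b hvw hab
    simp only
    rw [Finset.sum_mul_sum]
    refine Finset.sum_eq_zero fun x _ => Finset.sum_eq_zero fun y _ => ?_
    rw [hswap]
    by_cases hxy : Hg.Adj x y
    · rw [hForth x y a b hxy hab, mul_zero]
    · rw [hEorth v w x y hvw hxy, zero_mul]
end

section
/- Let ℋ be a complex Hilbert space and let h_{v,x} ∈ ℋ (v, x ∈ {1,…,n}) satisfy: ⟨h_{v,x}, h_{v,y}⟩ = 0 for x ≠ y; Σ_x h_{v,x} = Σ_x h_{w,x} for all v, w; ‖Σ_x h_{v,x}‖ = 1; and ⟨h_{v,x}, h_{w,y}⟩ ≥ 0 for all v, w, x, y. Set p(x,y|v,w) = ⟨h_{v,x}, h_{w,y}⟩, let φ_p : M_n(ℂ) → M_n(ℂ) be the linear map with φ_p(A)_{x,y} = Σ_{v,w} p(x,y|v,w) A_{v,w}, let glim be a Banach generalized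 limit, and define ψ_p : M_n(ℂ) → M_n(ℂ) by ψ_p(A)_{x,y} = glim(k ↦ (φ_p^k(A))_{x,y}). Then ψ_p is completely positive; in particular its Choi matrix C ∈ M_{n²}(ℂ), indexed by pairs, with entries C_{(v,x),(w,y)} = (ψ_p(E_{v,w}))_{x,y}, is positive semidefinite, and ψ_p maps positive semidefinite matrices to positive semidefinite matrices. -/
open scoped InnerProductSpace ComplexOrder

/-- A Banach generalized limit: a `ℂ`-linear functional on the space of complex
sequences that agrees with the limit on convergent sequences, is nonnegative on bounded
nonnegative sequences, and is shift-invariant on bounded sequences. -/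
def IsBanachLimit (glim : (ℕ → ℂ) →ₗ[ℂ] ℂ) : Prop :=
  (∀ (a : ℕ → ℂ) (L : ℂ), Filter.Tendsto a Filter.atTop (nhds L) → glim a = L) ∧
  (∀ a : ℕ → ℂ, (∃ C : ℝ, ∀ k, ‖a k‖ ≤ C) → (∀ k, 0 ≤ a k) → 0 ≤ glim a) ∧
  (∀ a : ℕ → ℂ, (∃ C : ℝ, ∀ k, ‖a k‖ ≤ C) → glim (fun k => a (k + 1)) = glim a)

/-- The map `φ_p(A)_{x,y} = Σ_{v,w} p(x,y|v,w) A_{v,w}` for a complex family `p`. -/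
noncomputable def phiMap {n : ℕ} (p : Fin n → Fin n → Fin n → Fin n → ℂ)
    (A : Matrix (Fin n) (Fin n) ℂ) : Matrix (Fin n) (Fin n) ℂ :=
  Matrix.of fun x y => ∑ v, ∑ w, p x y v w * A v w

/-- The map `ψ_p(A)_{x,y} = glim (k ↦ (φ_p^k(A))_{x,y})`. -/
noncomputable def psiMap {n : ℕ} (glim : (ℕ → ℂ) →ₗ[ℂ] ℂ)
    (p : Fin n → Fin n → Fin n → Fin n → ℂ)
    (A : Matrix (Fin n) (Fin n) ℂ) : Matrix (Fin n) (Fin n) ℂ :=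
  Matrix.of fun x y => glim (fun k => ((phiMap p)^[k] A) x y)

/-!
Write `p(x,y|v,w) = ⟪h v x, h w y⟫`. Factoring a positive semidefinite `G = Bᴴ B`, the ampliation
`(id ⊗ φ_p)(G)` is a sum over the rows `j` of `B` of Gram matrices of the vectors
`∑ₐ B j (s,a) • h a x`, so `φ_p` and all its iterates are completely positive. Since the
inner products are nonnegative and `‖∑ₓ h v x‖ = 1`, the coefficients `p(·,·|v,w)` have ℓ¹-norm `1`,
so `φ_p` contracts the entrywise ℓ¹-norm and the entries of `(id ⊗ φ_p^k)(G)` stay bounded in `k`.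
The quadratic forms `x* (id ⊗ φ_p^k)(G) x` are then bounded nonnegative sequences, whose Banach
limit is the quadratic form of `(id ⊗ ψ_p)(G)`.
-/

open Matrix Finset

namespace Matrix

variable {m : Type*} [Fintype m]

theorem posSemidef_of_forall_dotProduct_mulVec_nonneg {M : Matrix m m ℂ}
    (hM : ∀ x, 0 ≤ star x ⬝ᵥ (M *ᵥ x)) : M.PosSemidef := by
  classical
  rw [← isPositive_toEuclideanLin_iff, LinearMap.isPositive_iff_complex]
  intro x
  rw [EuclideanSpace.inner_eq_star_dotProduct, toLpLin_apply, WithLp.ofLp_toLp, dotProduct_star,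
    dotProduct_comm, (hM x).isSelfAdjoint.star_eq]
  obtain ⟨hre, him⟩ := Complex.nonneg_iff.mp (hM x)
  exact ⟨Complex.ext (by simp) (by simp [him]), hre⟩

theorem PosSemidef.exists_eq_conjTranspose_mul_self {𝕜 : Type*} [RCLike 𝕜] [DecidableEq m]
    {A : Matrix m m 𝕜} (hA : A.PosSemidef) : ∃ B : Matrix m m 𝕜, A = Bᴴ * B := by
  open scoped MatrixOrder in
  exact CStarAlgebra.nonneg_iff_eq_star_mul_self.mp hA.nonneg

theorem star_dotProduct_mulVec_entrywise {R α : Type*} [CommSemiring R] [StarRing R]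
    (L : (α → R) →ₗ[R] R) (M : α → Matrix m m R) (x : m → R) :
    star x ⬝ᵥ (of (fun i j => L fun k => M k i j) *ᵥ x) = L fun k => star x ⬝ᵥ (M k *ᵥ x) := by
  have hfun : (fun k => star x ⬝ᵥ (M k *ᵥ x)) = ∑ i, ∑ j, (star x i * x j) • fun k => M k i j := by
    ext k
    simp only [dotProduct, mulVec, Finset.sum_apply, Pi.smul_apply, smul_eq_mul, Finset.mul_sum]
    exact Finset.sum_congr rfl fun i _ => Finset.sum_congr rfl fun j _ => by ring
  rw [hfun]
  simp only [map_sum, map_smul, smul_eq_mul, dotProduct, mulVec, of_apply, Finset.mul_sum]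
  exact Finset.sum_congr rfl fun i _ => Finset.sum_congr rfl fun j _ => by ring

end Matrix

theorem IsBanachLimit.posSemidef_of_bounded {glim : (ℕ → ℂ) →ₗ[ℂ] ℂ} (hglim : IsBanachLimit glim)
    {m : Type*} [Fintype m] {M : ℕ → Matrix m m ℂ} (hM : ∀ k, (M k).PosSemidef)
    (hbd : ∀ i j, ∃ C, ∀ k, ‖M k i j‖ ≤ C) :
    (of fun i j => glim fun k => M k i j).PosSemidef := by
  choose C hC using hbd
  refine posSemidef_of_forall_dotProduct_mulVec_nonneg fun x => ?_
  rw [star_dotProduct_mulVec_entrywise]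
  refine hglim.2.1 _ ⟨∑ i, ∑ j, ‖x i‖ * (C i j * ‖x j‖), fun k => ?_⟩
    fun k => (hM k).dotProduct_mulVec_nonneg x
  simp only [dotProduct, mulVec, Finset.mul_sum]
  refine (norm_sum_le _ _).trans <| Finset.sum_le_sum fun i _ => (norm_sum_le _ _).trans <|
    Finset.sum_le_sum fun j _ => ?_
  rw [norm_mul, norm_mul, Pi.star_apply, norm_star]
  gcongr
  exact hC i j k

section CompletePositivity

variable {ι : Type}

/-- The ampliation `id_σ ⊗ Φ`, acting on each `ι × ι` block. -/
def ampliation (σ : Type*) (Φ : Matrix ι ι ℂ → Matrix ι ι ℂ) (G : Matrix (σ × ι) (σ × ι) ℂ) :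
    Matrix (σ × ι) (σ × ι) ℂ :=
  of fun i j => Φ (of fun a b => G (i.1, a) (j.1, b)) i.2 j.2

def IsCompletelyPositive (Φ : Matrix ι ι ℂ → Matrix ι ι ℂ) : Prop :=
  ∀ (σ : Type) [Fintype σ] (G : Matrix (σ × ι) (σ × ι) ℂ),
    G.PosSemidef → (ampliation σ Φ G).PosSemidef

def choiMatrix [DecidableEq ι] (Φ : Matrix ι ι ℂ → Matrix ι ι ℂ) : Matrix (ι × ι) (ι × ι) ℂ :=
  of fun i j => Φ (single i.1 j.1 1) i.2 j.2

theorem choiMatrix_eq_ampliation [DecidableEq ι] (Φ : Matrix ι ι ℂ → Matrix ι ι ℂ) :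
    choiMatrix Φ = ampliation ι Φ (choiMatrix id) := rfl

theorem posSemidef_choiMatrix_id [Finite ι] [DecidableEq ι] :
    (choiMatrix (id : Matrix ι ι ℂ → _)).PosSemidef := by
  have hvec : choiMatrix (id : Matrix ι ι ℂ → _) =
      vecMulVec (fun i => if i.1 = i.2 then 1 else 0) (star fun i => if i.1 = i.2 then 1 else 0) := by
    ext i j
    simp only [choiMatrix, of_apply, vecMulVec_apply, Pi.star_apply]
    split_ifs <;> simp_all
  rw [hvec]
  exact posSemidef_vecMulVec_self_star _

namespace IsCompletelyPositive

variable {Φ Ψ : Matrix ι ι ℂ → Matrix ι ι ℂ}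

theorem posSemidef_apply (hΦ : IsCompletelyPositive Φ) {A : Matrix ι ι ℂ} (hA : A.PosSemidef) :
    (Φ A).PosSemidef :=
  (hΦ Unit (A.submatrix Prod.snd Prod.snd) (hA.submatrix _)).submatrix fun x => ((), x)

theorem posSemidef_choiMatrix [Fintype ι] [DecidableEq ι] (hΦ : IsCompletelyPositive Φ) :
    (choiMatrix Φ).PosSemidef := by
  rw [choiMatrix_eq_ampliation]
  exact hΦ ι _ posSemidef_choiMatrix_id

theorem comp (hΦ : IsCompletelyPositive Φ) (hΨ : IsCompletelyPositive Ψ) :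
    IsCompletelyPositive (Φ ∘ Ψ) := fun σ _ G hG => hΦ σ _ (hΨ σ G hG)

theorem iterate (hΦ : IsCompletelyPositive Φ) : ∀ k, IsCompletelyPositive Φ^[k]
  | 0 => fun _ _ _ hG => hG
  | k + 1 => by rw [Function.iterate_succ']; exact hΦ.comp (hΦ.iterate k)

end IsCompletelyPositive

end CompletePositivity

section PhiMap

variable {n : ℕ}

theorem isCompletelyPositive_phiMap_inner {H : Type*} [NormedAddCommGroup H]
    [InnerProductSpace ℂ H] (h : Fin n → Fin n → H) :
    IsCompletelyPositive (phiMap fun x y v w => ⟪h v x, h w y⟫_ℂ) := by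
  intro σ _ G hG
  classical
  obtain ⟨B, rfl⟩ := hG.exists_eq_conjTranspose_mul_self
  have hgram : ampliation σ (phiMap fun x y v w => ⟪h v x, h w y⟫_ℂ) (Bᴴ * B) =
      ∑ j, gram ℂ fun i : σ × Fin n => ∑ a, B j (i.1, a) • h a i.2 := by
    ext i i'
    simp only [ampliation, phiMap, of_apply, Matrix.sum_apply, gram_apply, mul_apply,
      conjTranspose_apply, sum_inner, inner_sum, inner_smul_left, inner_smul_right, Finset.mul_sum,
      Complex.star_def]
    rw [Finset.sum_comm_cycle]
    refine Finset.sum_congr rfl fun j _ => Finset.sum_comm.trans <|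
      Finset.sum_congr rfl fun b _ => Finset.sum_congr rfl fun a _ => by ring
  rw [hgram]
  exact posSemidef_sum _ fun j _ => posSemidef_gram ℂ _

variable {p : Fin n → Fin n → Fin n → Fin n → ℂ}

theorem sum_sum_norm_phiMap_le (hp : ∀ v w, ∑ x, ∑ y, ‖p x y v w‖ ≤ 1)
    (A : Matrix (Fin n) (Fin n) ℂ) :
    ∑ x, ∑ y, ‖phiMap p A x y‖ ≤ ∑ v, ∑ w, ‖A v w‖ :=
  calc ∑ x, ∑ y, ‖phiMap p A x y‖
      ≤ ∑ x, ∑ y, ∑ v, ∑ w, ‖p x y v w‖ * ‖A v w‖ := by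
        refine Finset.sum_le_sum fun x _ => Finset.sum_le_sum fun y _ => ?_
        rw [phiMap, of_apply]
        refine (norm_sum_le _ _).trans <| Finset.sum_le_sum fun v _ => ?_
        exact (norm_sum_le _ _).trans_eq <| by simp only [norm_mul]
    _ = ∑ v, ∑ w, (∑ x, ∑ y, ‖p x y v w‖) * ‖A v w‖ := by
        simp only [Finset.sum_mul]
        rw [Finset.sum_comm_cycle]
        exact Finset.sum_congr rfl fun v _ => Finset.sum_comm_cycle
    _ ≤ ∑ v, ∑ w, ‖A v w‖ := by
        gcongr with v _ w _
        exact mul_le_of_le_one_left (norm_nonneg _) (hp v w)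

theorem norm_phiMap_iterate_apply_le (hp : ∀ v w, ∑ x, ∑ y, ‖p x y v w‖ ≤ 1)
    (A : Matrix (Fin n) (Fin n) ℂ) (k : ℕ) (x y : Fin n) :
    ‖(phiMap p)^[k] A x y‖ ≤ ∑ v, ∑ w, ‖A v w‖ := by
  have hsum : ∑ x, ∑ y, ‖(phiMap p)^[k] A x y‖ ≤ ∑ v, ∑ w, ‖A v w‖ := by
    induction k with
    | zero => rfl
    | succ k ih =>
      rw [Function.iterate_succ_apply']
      exact (sum_sum_norm_phiMap_le hp _).trans ih
  refine le_trans ?_ hsum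
  rw [← Fintype.sum_prod_type']
  exact Finset.single_le_sum (f := fun xy : Fin n × Fin n => ‖(phiMap p)^[k] A xy.1 xy.2‖)
    (fun _ _ => norm_nonneg _) (Finset.mem_univ (x, y))

theorem isCompletelyPositive_psiMap {glim : (ℕ → ℂ) →ₗ[ℂ] ℂ} (hglim : IsBanachLimit glim)
    (hφ : IsCompletelyPositive (phiMap p)) (hp : ∀ v w, ∑ x, ∑ y, ‖p x y v w‖ ≤ 1) :
    IsCompletelyPositive (psiMap glim p) := by
  intro σ _ G hG
  -- `(id ⊗ ψ_p)(G)` is, definitionally, the entrywise Banach limit of `(id ⊗ φ_p^k)(G)`.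
  exact hglim.posSemidef_of_bounded (fun k => hφ.iterate k σ G hG) fun i j =>
    ⟨_, fun k => norm_phiMap_iterate_apply_le hp _ k i.2 j.2⟩

end PhiMap

theorem sum_sum_norm_inner_eq_one {ι H : Type*} [Fintype ι] [NormedAddCommGroup H]
    [InnerProductSpace ℂ H] {u u' : ι → H} (hsum : ∑ x, u x = ∑ x, u' x) (hnorm : ‖∑ x, u x‖ = 1)
    (hpos : ∀ x y, 0 ≤ ⟪u x, u' y⟫_ℂ) :
    ∑ x, ∑ y, ‖⟪u x, u' y⟫_ℂ‖ = 1 := by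
  have hnorm_eq : ∀ x y, (‖⟪u x, u' y⟫_ℂ‖ : ℂ) = ⟪u x, u' y⟫_ℂ := fun x y =>
    (Complex.eq_coe_norm_of_nonneg (hpos x y)).symm
  have : ((∑ x, ∑ y, ‖⟪u x, u' y⟫_ℂ‖ : ℝ) : ℂ) = 1 :=
    calc ((∑ x, ∑ y, ‖⟪u x, u' y⟫_ℂ‖ : ℝ) : ℂ) = ⟪∑ x, u x, ∑ y, u' y⟫_ℂ := by
          push_cast
          simp only [hnorm_eq, sum_inner, inner_sum]
          exact Finset.sum_comm
      _ = 1 := by rw [← hsum, inner_self_eq_norm_sq_to_K, hnorm]; norm_num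
  exact_mod_cast this

theorem psiMap_completely_positive_general {n : ℕ}
    {H : Type} [NormedAddCommGroup H] [InnerProductSpace ℂ H]
    (h : Fin n → Fin n → H)
    (hsum : ∀ v w : Fin n, ∑ x, h v x = ∑ x, h w x)
    (hnorm : ∀ v : Fin n, ‖∑ x, h v x‖ = 1)
    (hpos : ∀ v w x y : Fin n, 0 ≤ ⟪h v x, h w y⟫_ℂ)
    (glim : (ℕ → ℂ) →ₗ[ℂ] ℂ) (hglim : IsBanachLimit glim) :
    Matrix.PosSemidef (Matrix.of fun vx wy : Fin n × Fin n =>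
      psiMap glim (fun x y v w => ⟪h v x, h w y⟫_ℂ)
        (Matrix.single vx.1 wy.1 1) vx.2 wy.2) ∧
    (∀ A : Matrix (Fin n) (Fin n) ℂ, A.PosSemidef →
      (psiMap glim (fun x y v w => ⟪h v x, h w y⟫_ℂ) A).PosSemidef) := by
  have hψ : IsCompletelyPositive (psiMap glim fun x y v w => ⟪h v x, h w y⟫_ℂ) :=
    isCompletelyPositive_psiMap hglim (isCompletelyPositive_phiMap_inner h) fun v w =>
      (sum_sum_norm_inner_eq_one (hsum v w) (hnorm v) (hpos v w)).le
  exact ⟨hψ.posSemidef_choiMatrix, fun A hA => hψ.posSemidef_apply hA⟩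

/-- For `p(x,y|v,w) = ⟪h v x, h w y⟫` arising from a vectorial correlation, and a Banach
generalized limit `glim`, the map `ψ_p` is completely positive: its Choi matrix
`C_{(v,x),(w,y)} = (ψ_p(E_{v,w}))_{x,y}` is positive semidefinite, and `ψ_p` maps
positive semidefinite matrices to positive semidefinite matrices. -/
theorem psiMap_completely_positive {n : ℕ}
    {H : Type} [NormedAddCommGroup H] [InnerProductSpace ℂ H] [CompleteSpace H]
    (h : Fin n → Fin n → H)
    (horth : ∀ v x y : Fin n, x ≠ y → ⟪h v x, h v y⟫_ℂ = 0)
    (hsum : ∀ v w : Fin n, ∑ x, h v x = ∑ x, h w x)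
    (hnorm : ∀ v : Fin n, ‖∑ x, h v x‖ = 1)
    (hpos : ∀ v w x y : Fin n, 0 ≤ ⟪h v x, h w y⟫_ℂ)
    (glim : (ℕ → ℂ) →ₗ[ℂ] ℂ) (hglim : IsBanachLimit glim) :
    Matrix.PosSemidef (Matrix.of fun vx wy : Fin n × Fin n =>
      psiMap glim (fun x y v w => ⟪h v x, h w y⟫_ℂ)
        (Matrix.single vx.1 wy.1 1) vx.2 wy.2) ∧
    (∀ A : Matrix (Fin n) (Fin n) ℂ, A.PosSemidef →
      (psiMap glim (fun x y v w => ⟪h v x, h w y⟫_ℂ) A).PosSemidef) :=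
  psiMap_completely_positive_general h hsum hnorm hpos glim hglim
end
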